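/- arXiv:2203.12077 — 3 statements merged into one kernel-verified Lean document; each statement's English description precedes it below -/
import Mathlib

section
/- The theta function of the Kummer lattice is given by Θ_K(q²,w) = θ₀¹⁶ + 30·θ₀⁸θ₁⁸ + θ₁¹⁶. -/
/-!
Reducing a vector of `K` (in doubled coordinates `a = 2v`) modulo 2 gives an affine function
`f : F₂⁴ → F₂`, so `K` is the disjoint union, over the 32 affine functions `f`, of the classes
`{a | a ≡ f (mod 2)}`. Each affine `f` takes the value 1 an even number of times, hence `Σ aₓ` and
`Σ aₓ²` are even on its class and the summand `q^{Σ aₓ²/2} w^{Σ aₓ/2}` factors as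
`∏ₓ p^{aₓ²} u^{aₓ}`. By absolute convergence the class of `f` then contributes `∏ₓ θ_{f(x)}`,
where `θ₀` and `θ₁` are the parts of the Jacobi theta series `Σₙ p^{n²} uⁿ` over even and odd
`n`. The constant functions give `θ₀¹⁶` and `θ₁¹⁶`, and each of the 30 nonconstant ones vanishes
on exactly 8 points.
-/

/-- The rank-one theta function `θ₀(q²,w) = Σ_{k∈ℤ} q^{2k²} w^k`. -/
noncomputable def theta0 (q w : ℂ) : ℂ := ∑' k : ℤ, q ^ (2 * k ^ 2) * w ^ k

/-- The rank-one theta function `θ₁(q²,w) = Σ_{k∈ℤ+1/2} q^{2k²} w^k`,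
written via the square roots `p² = q`, `u² = w`. -/
noncomputable def theta1 (p u : ℂ) : ℂ :=
  ∑' k : ℤ, p ^ (4 * k ^ 2 + 4 * k + 1) * u ^ (2 * k + 1)

/-- The vector space `F₂⁴` (16 points), indexing the coordinates. -/
abbrev V4 : Type := Fin 4 → ZMod 2

/-- The Kummer lattice in exceptional-curve coordinates, in *doubled* coordinates:
`a = 2v` where `v ∈ ℝ^{F₂⁴}` has half-integer coordinates and the function
`F₂⁴ → F₂`, `x ↦ 2 v_x mod 2 = a_x mod 2`, is affine-linear. -/
def KummerD : Set (V4 → ℤ) :=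
  {a | ∃ (l : V4 →ₗ[ZMod 2] ZMod 2) (c : ZMod 2), ∀ x, ((a x : ZMod 2)) = l x + c}

/-- The theta function `Θ_T(q²,w) = Σ_{v∈T} q^{2 Σ v_x²} w^{Σ v_x}`, for a set `T`
of half-integer vectors given in doubled coordinates `a = 2v`, so that
`2 Σ v_x² = (Σ a_x²)/2` and `Σ v_x = (Σ a_x)/2` (integers for the sets considered). -/
noncomputable def ThetaL {ι : Type*} [Fintype ι] (T : Set (ι → ℤ)) (q w : ℂ) : ℂ :=
  ∑' v : T, q ^ ((∑ i, (v : ι → ℤ) i ^ 2) / 2) * w ^ ((∑ i, (v : ι → ℤ) i) / 2)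

open Finset Complex

lemma zpow_sum₀ {ι M : Type*} [CommGroupWithZero M] {a : M} (ha : a ≠ 0) (s : Finset ι)
    (f : ι → ℤ) : a ^ (∑ i ∈ s, f i) = ∏ i ∈ s, a ^ f i := by
  induction s using Finset.cons_induction with
  | empty => simp
  | cons i s _ ih => rw [sum_cons, prod_cons, zpow_add₀ ha, ih]

lemma zpow_ediv_two_of_even {M : Type*} [DivisionMonoid M] {p q : M} (hp : p ^ 2 = q) {n : ℤ}
    (hn : Even n) : q ^ (n / 2) = p ^ n := by
  obtain ⟨m, rfl⟩ := hn
  rw [← two_mul, Int.mul_ediv_cancel_left _ two_ne_zero, zpow_mul, zpow_two, ← sq, hp]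

lemma prod_comp_zmod_two {ι M : Type*} [Fintype ι] [CommMonoid M] (F : ZMod 2 → M)
    (f : ι → ZMod 2) : ∏ x, F (f x) = F 0 ^ #{x | f x = 0} * F 1 ^ #{x | f x = 1} := by
  rw [← prod_fiberwise univ f, show (univ : Finset (ZMod 2)) = {0, 1} from rfl,
    prod_pair zero_ne_one]
  congr 1 <;> exact prod_eq_pow_card fun x hx => by rw [(mem_filter.1 hx).2]

section PiProd

universe u

variable {β R : Type*} [NormedCommRing R]

theorem summable_norm_pi_prod {ι : Type u} [Fintype ι] {g : ι → β → R}
    (hg : ∀ i, Summable fun b => ‖g i b‖) :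
    Summable fun k : ι → β => ‖∏ i, g i (k i)‖ := by
  let P : ∀ (α : Type u) [Fintype α], Prop := fun α _ => ∀ {g : α → β → R},
    (∀ i, Summable fun b => ‖g i b‖) → Summable fun k : α → β => ‖∏ i, g i (k i)‖
  refine Fintype.induction_empty_option (P := P) ?_ ?_ ?_ ι hg
  · intro α α' _ e ih g hg
    let := Fintype.ofEquiv α' e.symm
    rw [← (e.arrowCongr (.refl β)).summable_iff]
    refine (ih fun i => hg (e i)).congr fun k => ?_
    rw [Function.comp_apply, ← e.prod_comp]
    simp
  · intro g _
    have : Finite (PEmpty → β) := Finite.of_subsingleton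
    exact .of_finite
  · intro α _ ih g hg
    rw [← (Equiv.piOptionEquivProd (β := fun _ => β)).symm.summable_iff]
    refine ((hg none).mul_norm (ih fun i => hg (some i))).congr fun k => ?_
    simp only [Function.comp_apply, Fintype.prod_option]
    rfl

theorem tsum_pi_prod [CompleteSpace R] {ι : Type u} [Fintype ι] {g : ι → β → R}
    (hg : ∀ i, Summable fun b => ‖g i b‖) :
    ∑' k : ι → β, ∏ i, g i (k i) = ∏ i, ∑' b, g i b := by
  let P : ∀ (α : Type u) [Fintype α], Prop := fun α _ => ∀ {g : α → β → R},
    (∀ i, Summable fun b => ‖g i b‖) → ∑' k : α → β, ∏ i, g i (k i) = ∏ i, ∑' b, g i b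
  refine Fintype.induction_empty_option (P := P) ?_ ?_ ?_ ι hg
  · intro α α' _ e ih g hg
    let := Fintype.ofEquiv α' e.symm
    rw [← (e.arrowCongr (.refl β)).tsum_eq, ← e.prod_comp, ← ih fun i => hg (e i)]
    refine tsum_congr fun k => ?_
    rw [← e.prod_comp]
    simp
  · intro g _
    simp
  · intro α _ ih g hg
    rw [← (Equiv.piOptionEquivProd (β := fun _ => β)).symm.tsum_eq, Fintype.prod_option,
      ← ih fun i => hg (some i), tsum_mul_tsum_of_summable_norm (hg none)
        (summable_norm_pi_prod fun i => hg (some i))]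
    refine tsum_congr fun k => ?_
    simp only [Fintype.prod_option]
    rfl

end PiProd

noncomputable def thetaTerm (p u : ℂ) (n : ℤ) : ℂ := p ^ (n ^ 2) * u ^ n

lemma thetaTerm_eq_jacobiTheta₂_term {p u : ℂ} (hp : p ≠ 0) (hu : u ≠ 0) (n : ℤ) :
    thetaTerm p u n =
      jacobiTheta₂_term n (log u / (2 * Real.pi * I)) (log p / (Real.pi * I)) := by
  have hπ : (Real.pi : ℂ) * I ≠ 0 := mul_ne_zero (ofReal_ne_zero.2 Real.pi_ne_zero) I_ne_zero
  have h2π : 2 * (Real.pi : ℂ) * I ≠ 0 := by rw [mul_assoc]; exact mul_ne_zero two_ne_zero hπ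
  have hexp : 2 * Real.pi * I * n * (log u / (2 * Real.pi * I)) +
      Real.pi * I * n ^ 2 * (log p / (Real.pi * I)) = ((n ^ 2 : ℤ) : ℂ) * log p + n * log u := by
    field_simp
    push_cast
    ring
  rw [jacobiTheta₂_term, hexp, exp_add, exp_int_mul, exp_int_mul, exp_log hp, exp_log hu,
    thetaTerm]

lemma summable_norm_thetaTerm {p u : ℂ} (hp0 : p ≠ 0) (hp1 : ‖p‖ < 1) (hu : u ≠ 0) :
    Summable fun n => ‖thetaTerm p u n‖ := by
  simp_rw [thetaTerm_eq_jacobiTheta₂_term hp0 hu]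
  refine summable_norm_iff.2 ((summable_jacobiTheta₂_term_iff _ _).2 ?_)
  have hlog : (log p).re < 0 := by
    rw [log_re]
    exact Real.log_neg (norm_pos_iff.2 hp0) hp1
  rw [mul_comm, ← div_div, div_ofReal_im, div_I, neg_im, mul_I_im]
  exact div_pos (neg_pos.2 hlog) Real.pi_pos

noncomputable def thetaChar (p u : ℂ) (e : ZMod 2) : ℂ :=
  ∑' k : ℤ, thetaTerm p u (2 * k + e.val)

lemma thetaChar_zero {p q u w : ℂ} (hp : p ^ 2 = q) (hu : u ^ 2 = w) :
    thetaChar p u 0 = theta0 q w := by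
  refine tsum_congr fun k => ?_
  rw [thetaTerm, ZMod.val_zero, Nat.cast_zero, add_zero, ← hp, ← hu, ← zpow_natCast,
    ← zpow_natCast u, ← zpow_mul, ← zpow_mul]
  congr 2
  ring

lemma thetaChar_one (p u : ℂ) : thetaChar p u 1 = theta1 p u := by
  refine tsum_congr fun k => ?_
  rw [thetaTerm, ZMod.val_one, Nat.cast_one]
  ring_nf

noncomputable def latticeTerm {ι : Type*} [Fintype ι] (q w : ℂ) (a : ι → ℤ) : ℂ :=
  q ^ ((∑ i, a i ^ 2) / 2) * w ^ ((∑ i, a i) / 2)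

section ResidueClass

variable {ι : Type*}

def residueClass (f : ι → ZMod 2) : Set (ι → ℤ) := {a | ∀ x, (a x : ZMod 2) = f x}

lemma disjoint_residueClass {f g : ι → ZMod 2} (h : f ≠ g) :
    Disjoint (residueClass f) (residueClass g) :=
  Set.disjoint_left.2 fun _ hf hg => h (funext fun x => (hf x).symm.trans (hg x))

def residueClassEquiv (f : ι → ZMod 2) : (ι → ℤ) ≃ residueClass f where
  toFun k := ⟨fun x => 2 * k x + (f x).val, fun x => by simp [show (2 : ZMod 2) = 0 from rfl]⟩
  invFun a x := a.1 x / 2 -- `Int.ediv` rounds down, so `(2 * k + 1) / 2 = k`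
  left_inv k := funext fun x => by have := (f x).val_lt; simp only; omega
  right_inv a := Subtype.ext <| funext fun x => by
    have h := ZMod.val_intCast (n := 2) (a.1 x)
    rw [a.2 x] at h
    simp only
    omega

variable [Fintype ι] {p q u w : ℂ}

lemma even_sum_of_mem_residueClass {f : ι → ZMod 2} (hf : ∑ x, f x = 0) {a : ι → ℤ}
    (ha : a ∈ residueClass f) : Even (∑ x, a x) := by
  rw [← ZMod.intCast_eq_zero_iff_even, Int.cast_sum, ← hf]
  exact sum_congr rfl fun x _ => ha x

lemma even_sum_sq_iff (a : ι → ℤ) : Even (∑ x, a x ^ 2) ↔ Even (∑ x, a x) := by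
  simp only [← ZMod.intCast_eq_zero_iff_even, Int.cast_sum, Int.cast_pow, ZMod.pow_card]

lemma latticeTerm_eq_prod_thetaTerm (hp0 : p ≠ 0) (hu0 : u ≠ 0) (hp : p ^ 2 = q)
    (hu : u ^ 2 = w) {a : ι → ℤ} (ha : Even (∑ x, a x)) :
    latticeTerm q w a = ∏ x, thetaTerm p u (a x) := by
  rw [latticeTerm, zpow_ediv_two_of_even hp ((even_sum_sq_iff a).2 ha),
    zpow_ediv_two_of_even hu ha, zpow_sum₀ hp0, zpow_sum₀ hu0, ← prod_mul_distrib]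
  rfl

theorem hasSum_latticeTerm_residueClass (hp0 : p ≠ 0) (hp1 : ‖p‖ < 1) (hu0 : u ≠ 0)
    (hp : p ^ 2 = q) (hu : u ^ 2 = w) {f : ι → ZMod 2} (hf : ∑ x, f x = 0) :
    HasSum (fun a : residueClass f => latticeTerm q w (a : ι → ℤ))
      (∏ x, thetaChar p u (f x)) := by
  have hg : ∀ x, Summable fun k : ℤ => ‖thetaTerm p u (2 * k + (f x).val)‖ := fun x =>
    (summable_norm_thetaTerm hp0 hp1 hu0).comp_injective fun k l h => by simpa using h
  have hterm : (fun a : residueClass f => latticeTerm q w (a : ι → ℤ)) ∘ residueClassEquiv f =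
      fun k => ∏ x, thetaTerm p u (2 * k x + (f x).val) :=
    funext fun k => latticeTerm_eq_prod_thetaTerm hp0 hu0 hp hu
      (even_sum_of_mem_residueClass hf (residueClassEquiv f k).2)
  rw [← (residueClassEquiv f).hasSum_iff, hterm]
  unfold thetaChar
  rw [← tsum_pi_prod hg]
  exact (summable_norm_pi_prod hg).of_norm.hasSum

end ResidueClass

def affineFuns (ι : Type*) [Fintype ι] [DecidableEq ι] : Finset ((ι → ZMod 2) → ZMod 2) :=
  univ.image fun bc : (ι → ZMod 2) × ZMod 2 => fun x => bc.1 ⬝ᵥ x + bc.2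

lemma kummerD_eq_biUnion : KummerD = ⋃ f ∈ affineFuns (Fin 4), residueClass f := by
  ext a
  constructor
  · rintro ⟨l, c, h⟩
    refine Set.mem_biUnion (mem_image_of_mem _ (mem_univ ((dotProductEquiv _ _).symm l, c)))
      fun x => ?_
    rw [h, ← dotProductEquiv_apply_apply, LinearEquiv.apply_symm_apply]
  · intro ha
    obtain ⟨f, hf, ha⟩ := Set.mem_iUnion₂.1 ha
    obtain ⟨⟨b, c⟩, -, rfl⟩ := mem_image.1 hf
    exact ⟨dotProductEquiv _ _ b, c, ha⟩

lemma sum_eq_zero_of_mem_affineFuns {f : V4 → ZMod 2} (hf : f ∈ affineFuns (Fin 4)) :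
    ∑ x, f x = 0 := by
  obtain ⟨bc, -, rfl⟩ := mem_image.1 hf
  revert bc
  decide

lemma affineFuns_weights :
    (affineFuns (Fin 4)).val.map (fun f => (#{x | f x = 0}, #{x | f x = 1})) =
      {(16, 0), (0, 16)} + Multiset.replicate 30 (8, 8) := by
  decide

/-- The weight enumerator of the first-order Reed–Muller code of length 16. -/
lemma sum_affineFuns_prod {R : Type*} [CommSemiring R] (F : ZMod 2 → R) :
    ∑ f ∈ affineFuns (Fin 4), ∏ x, F (f x) = F 0 ^ 16 + 30 * F 0 ^ 8 * F 1 ^ 8 + F 1 ^ 16 := by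
  calc ∑ f ∈ affineFuns (Fin 4), ∏ x, F (f x)
      = (((affineFuns (Fin 4)).val.map fun f => (#{x | f x = 0}, #{x | f x = 1})).map
          fun n => F 0 ^ n.1 * F 1 ^ n.2).sum := by
        simp_rw [prod_comp_zmod_two, Multiset.map_map]
        rfl
    _ = _ := by
        rw [affineFuns_weights]
        simp
        ring

/-- `Θ_K(q²,w) = θ₀¹⁶ + 30·θ₀⁸θ₁⁸ + θ₁¹⁶` for the Kummer lattice `K`. -/
theorem theta_Kummer (q w p u : ℂ)
    (hq0 : 0 < ‖q‖) (hq1 : ‖q‖ < 1) (hw : w ≠ 0)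
    (hp : p ^ 2 = q) (hu : u ^ 2 = w) :
    ThetaL KummerD q w =
      theta0 q w ^ 16 + 30 * theta0 q w ^ 8 * theta1 p u ^ 8 + theta1 p u ^ 16 := by
  have hp0 : p ≠ 0 := by rintro rfl; simp [← hp] at hq0
  have hu0 : u ≠ 0 := by rintro rfl; simp [← hu] at hw
  have hp1 : ‖p‖ < 1 := by
    rw [← hp, norm_pow] at hq1
    exact (pow_lt_one_iff_of_nonneg (norm_nonneg p) two_ne_zero).1 hq1
  have hclass : ∀ f ∈ affineFuns (Fin 4),
      HasSum (fun a : residueClass f => latticeTerm q w (a : V4 → ℤ))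
        (∏ x, thetaChar p u (f x)) := fun f hf =>
    hasSum_latticeTerm_residueClass hp0 hp1 hu0 hp hu (sum_eq_zero_of_mem_affineFuns hf)
  have hK := hasSum_sum_disjoint (f := latticeTerm q w) (affineFuns (Fin 4))
    (fun f _ g _ h => disjoint_residueClass h) hclass
  rw [ThetaL, kummerD_eq_biUnion]
  refine hK.tsum_eq.trans ?_
  rw [sum_affineFuns_prod, thetaChar_zero hp hu, thetaChar_one]
end

section
/- The following quadratic theta function identity holds: θ₀(q²,w)² + θ₁(q²,w)² = ∏_{n≥1} (1−q^{2n})² (1+q^{2n−1})² (1+wq^{2n−1}) (1+w⁻¹q^{2n−1}). -/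
/-!
Substituting `(m, n) = (j + k, j - k)` or `(j + k + 1, j - k)` according to the parity of
`m + n` gives `θ₀(q²,w)² + θ₁(q²,w)² = Σ_{m,n} q^{m²+n²} w^m = θ(w) θ(1)`, where
`θ(w) = Σ_m q^{m²} w^m`; the Jacobi triple product
`θ(w) = ∏_{n≥1} (1 - q^{2n}) (1 + w q^{2n-1}) (1 + w⁻¹ q^{2n-1})` at `w` and at `1` then gives
the product.

The triple product is the limit `N → ∞` of its finite form
`∏_{n<N} (1 + w q^{2n+1}) (1 + w⁻¹ q^{2n+1}) = Σ_{|m|≤N} [2N, N+m]_{q²} q^{m²} w^m`,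
a case of Cauchy's `q`-binomial theorem. The limit is taken termwise by Tannery's theorem: the
Gaussian binomials `[M, m]_x = (x;x)_M / ((x;x)_m (x;x)_{M-m})` are uniformly bounded because
`(x;x)_k` converges to `(x;x)_∞ ≠ 0`, and `[2N, N+m]_x → 1 / (x;x)_∞`.
-/

open Filter Finset Topology Complex Real

lemma choose_two_succ (m : ℕ) : (m + 1).choose 2 = m.choose 2 + m := by
  rw [Nat.choose_succ_succ, Nat.choose_one_right, add_comm]

lemma two_mul_choose_two_add_self (m : ℕ) : 2 * m.choose 2 + m = m ^ 2 := by
  induction m with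
  | zero => rfl
  | succ m ih => rw [choose_two_succ]; nlinarith [ih]

lemma prod_range_pow_two_mul_add_one {M : Type*} [CommMonoid M] (x : M) (N : ℕ) :
    ∏ n ∈ range N, x ^ (2 * n + 1) = x ^ (N ^ 2) := by
  induction N with
  | zero => simp
  | succ N ih => rw [prod_range_succ, ih, ← pow_add]; ring_nf

section GaussianBinomial

variable {R : Type*} [CommRing R] (x : R)

def qPochhammer (k : ℕ) : R := ∏ i ∈ range k, (1 - x ^ (i + 1))

def gaussBinom : ℕ → ℕ → R
  | _, 0 => 1
  | 0, _ + 1 => 0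
  | M + 1, m + 1 => gaussBinom M m + x ^ (m + 1) * gaussBinom M (m + 1)

@[simp] lemma gaussBinom_zero_right (M : ℕ) : gaussBinom x M 0 = 1 := by cases M <;> rfl

lemma gaussBinom_succ_succ (M m : ℕ) :
    gaussBinom x (M + 1) (m + 1) = gaussBinom x M m + x ^ (m + 1) * gaussBinom x M (m + 1) :=
  rfl

lemma gaussBinom_of_lt {M m : ℕ} (h : M < m) : gaussBinom x M m = 0 := by
  induction M generalizing m with
  | zero => obtain ⟨m, rfl⟩ := Nat.exists_eq_add_one_of_ne_zero h.ne'; rfl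
  | succ M ih =>
    obtain ⟨m, rfl⟩ := Nat.exists_eq_add_one_of_ne_zero (Nat.zero_lt_of_lt h).ne'
    rw [gaussBinom_succ_succ, ih (by omega), ih (by omega), mul_zero, add_zero]

/-- **Cauchy's `q`-binomial theorem.** -/
theorem prod_one_add_pow_mul_eq_sum (M : ℕ) (z : R) :
    ∏ j ∈ range M, (1 + x ^ j * z) =
      ∑ m ∈ range (M + 1), x ^ m.choose 2 * gaussBinom x M m * z ^ m := by
  induction M generalizing z with
  | zero => simp
  | succ M ih =>
    -- peel off the factor `1 + z` and apply the induction hypothesis at `x * z`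
    have hconst : ∑ m ∈ range (M + 1), x ^ m.choose 2 * gaussBinom x M m * (x * z) ^ m = 1 +
        ∑ k ∈ range (M + 1), x ^ (k + 1).choose 2 * (x ^ (k + 1) * gaussBinom x M (k + 1)) *
          z ^ (k + 1) := by
      rw [sum_range_succ (fun k => x ^ (k + 1).choose 2 * _ * _) M,
        gaussBinom_of_lt x (Nat.lt_succ_self M), mul_zero, mul_zero, zero_mul, add_zero,
        sum_range_succ', add_comm]
      simp only [gaussBinom_zero_right, Nat.choose_zero_succ, pow_zero, mul_one]
      refine congrArg (1 + ·) (sum_congr rfl fun k _ => ?_)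
      rw [choose_two_succ]
      ring
    have hshift : (∑ m ∈ range (M + 1), x ^ m.choose 2 * gaussBinom x M m * (x * z) ^ m) * z =
        ∑ k ∈ range (M + 1), x ^ (k + 1).choose 2 * gaussBinom x M k * z ^ (k + 1) := by
      rw [sum_mul]
      refine sum_congr rfl fun k _ => ?_
      rw [choose_two_succ]
      ring
    rw [prod_range_succ', pow_zero, one_mul, prod_congr rfl fun j _ => by rw [pow_succ, mul_assoc],
      ih, sum_range_succ' _ (M + 1)]
    simp only [gaussBinom_succ_succ, gaussBinom_zero_right, mul_add, add_mul, sum_add_distrib]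
    rw [mul_one, hshift, hconst, Nat.choose_zero_succ, pow_zero, pow_zero]
    ring

theorem gaussBinom_mul_qPochhammer {M m : ℕ} (h : m ≤ M) :
    gaussBinom x M m * (qPochhammer x m * qPochhammer x (M - m)) = qPochhammer x M := by
  induction M generalizing m with
  | zero =>
    obtain rfl : m = 0 := by omega
    simp [qPochhammer]
  | succ M ih =>
    rcases m with _ | m
    · simp [qPochhammer]
    rcases Nat.lt_or_ge m M with hm | hm
    · obtain ⟨k, rfl⟩ : ∃ k, M = m + 1 + k := ⟨M - (m + 1), by omega⟩
      have h1 := ih (m := m) (by omega)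
      have h2 := ih (m := m + 1) (by omega)
      rw [show m + 1 + k - m = k + 1 by omega] at h1
      rw [show m + 1 + k - (m + 1) = k by omega] at h2
      rw [show m + 1 + k + 1 - (m + 1) = k + 1 by omega, gaussBinom_succ_succ]
      simp only [qPochhammer, prod_range_succ] at h1 h2 ⊢
      linear_combination (1 - x ^ (m + 1)) * h1 + x ^ (m + 1) * (1 - x ^ (k + 1)) * h2
    · obtain rfl : m = M := by omega
      have h1 := ih (m := m) le_rfl
      rw [Nat.sub_self, gaussBinom_succ_succ, gaussBinom_of_lt x (Nat.lt_succ_self m)] at *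
      simp only [qPochhammer, prod_range_succ, prod_range_zero] at h1 ⊢
      linear_combination (1 - x ^ (m + 1)) * h1

theorem prod_range_one_add_mul_pow_odd (M : ℕ) (q z : R) :
    ∏ j ∈ range M, (1 + z * q ^ (2 * j + 1)) =
      ∑ m ∈ range (M + 1), gaussBinom (q ^ 2) M m * q ^ (m ^ 2) * z ^ m := by
  convert prod_one_add_pow_mul_eq_sum (q ^ 2) M (q * z) using 1
  · exact prod_congr rfl fun j _ => by ring
  · refine sum_congr rfl fun m _ => ?_
    rw [← two_mul_choose_two_add_self m]
    ring

end GaussianBinomial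

theorem prod_range_jacobi_eq_sum {K : Type*} [Field K] {q w : K} (hq : q ≠ 0) (hw : w ≠ 0)
    (N : ℕ) :
    ∏ n ∈ range N, ((1 + w * q ^ (2 * n + 1)) * (1 + w⁻¹ * q ^ (2 * n + 1))) =
      ∑ m ∈ Icc (-N : ℤ) N, gaussBinom (q ^ 2) (2 * N) (N + m).toNat * q ^ (m ^ 2) * w ^ m := by
  -- both sides are `(w^N / q^{N²})⁻¹` times the two sides of
  -- `prod_range_one_add_mul_pow_odd` at `z = w / q^{2N}`
  have hc : w ^ N * (q ^ (N ^ 2))⁻¹ ≠ 0 := by simp [hq, hw]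
  have hprod : ∏ j ∈ range (2 * N), (1 + w * (q ^ (2 * N))⁻¹ * q ^ (2 * j + 1)) =
      w ^ N * (q ^ (N ^ 2))⁻¹ *
        ∏ n ∈ range N, ((1 + w * q ^ (2 * n + 1)) * (1 + w⁻¹ * q ^ (2 * n + 1))) := by
    rw [← prod_range_pow_two_mul_add_one, ← prod_inv_distrib, ← card_range N, ← prod_const,
      card_range, ← prod_mul_distrib, ← prod_mul_distrib, two_mul, prod_range_add,
      ← prod_range_reflect, ← prod_mul_distrib]
    refine prod_congr rfl fun n hn => ?_
    have hn : n < N := mem_range.mp hn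
    have h1 : q ^ (2 * (N - 1 - n) + 1) * q ^ (2 * n + 1) = q ^ (N + N) := by
      rw [← pow_add]; congr 1; omega
    have h2 : q ^ (2 * (N + n) + 1) = q ^ (N + N) * q ^ (2 * n + 1) := by
      rw [← pow_add]; congr 1; omega
    rw [h2, ← h1]
    field_simp
    ring
  have hsum : ∑ m ∈ range (2 * N + 1),
      gaussBinom (q ^ 2) (2 * N) m * q ^ (m ^ 2) * (w * (q ^ (2 * N))⁻¹) ^ m =
      w ^ N * (q ^ (N ^ 2))⁻¹ *
        ∑ m ∈ Icc (-N : ℤ) N, gaussBinom (q ^ 2) (2 * N) (N + m).toNat * q ^ (m ^ 2) * w ^ m := by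
    rw [Int.Icc_eq_finset_map, sum_map, show ((N : ℤ) + 1 - -N).toNat = 2 * N + 1 by omega,
      mul_sum]
    refine sum_congr rfl fun j _ => ?_
    simp only [Function.Embedding.trans_apply, Nat.castEmbedding_apply, addLeftEmbedding_apply]
    rw [show ((N : ℤ) + (-N + j)).toNat = j by omega,
      show (-(N : ℤ) + j) ^ 2 = ((N ^ 2 + j ^ 2 : ℕ) : ℤ) - ((2 * N * j : ℕ) : ℤ) by push_cast; ring,
      zpow_sub₀ hq, zpow_add₀ hw, zpow_neg]
    simp only [zpow_natCast, pow_add, pow_mul q (2 * N) j, mul_pow, inv_pow]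
    field_simp
  refine mul_left_cancel₀ hc ?_
  rw [← hprod, ← hsum, prod_range_one_add_mul_pow_odd]

section Convergence

variable {𝕜 : Type*} [NormedField 𝕜] {x : 𝕜}

lemma one_sub_pow_succ_ne_zero (hx : ‖x‖ < 1) (n : ℕ) : 1 - x ^ (n + 1) ≠ 0 := by
  refine sub_ne_zero.mpr fun h => ?_
  have : ‖x ^ (n + 1)‖ < 1 := by rw [norm_pow]; exact pow_lt_one₀ (norm_nonneg x) hx n.succ_ne_zero
  rw [← h, norm_one] at this
  exact this.false

lemma qPochhammer_ne_zero (hx : ‖x‖ < 1) (k : ℕ) : qPochhammer x k ≠ 0 :=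
  prod_ne_zero_iff.mpr fun i _ => one_sub_pow_succ_ne_zero hx i

lemma gaussBinom_eq_mul_inv_mul_inv (hx : ‖x‖ < 1) {M m : ℕ} (h : m ≤ M) :
    gaussBinom x M m = qPochhammer x M * (qPochhammer x m)⁻¹ * (qPochhammer x (M - m))⁻¹ := by
  rw [← gaussBinom_mul_qPochhammer x h]
  field_simp [qPochhammer_ne_zero hx]

variable [CompleteSpace 𝕜]

lemma multipliable_one_add_mul_pow (hx : ‖x‖ < 1) (c : 𝕜) :
    Multipliable fun n : ℕ => 1 + c * x ^ n := by
  refine multipliable_one_add_of_summable ?_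
  simpa [norm_mul, norm_pow] using
    (summable_geometric_of_lt_one (norm_nonneg x) hx).mul_left ‖c‖

lemma multipliable_one_sub_pow_succ (hx : ‖x‖ < 1) :
    Multipliable fun n : ℕ => 1 - x ^ (n + 1) :=
  (multipliable_one_add_mul_pow hx (-x)).congr fun n => by ring

lemma tprod_one_sub_pow_succ_ne_zero (hx : ‖x‖ < 1) : ∏' n : ℕ, (1 - x ^ (n + 1)) ≠ 0 := by
  simp_rw [sub_eq_add_neg]
  refine tprod_one_add_ne_zero_of_summable (fun n => ?_) ?_
  · simpa [sub_eq_add_neg] using one_sub_pow_succ_ne_zero hx n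
  · simpa [norm_pow, pow_succ] using
      (summable_geometric_of_lt_one (norm_nonneg x) hx).mul_right ‖x‖

lemma tendsto_qPochhammer (hx : ‖x‖ < 1) :
    Tendsto (qPochhammer x) atTop (𝓝 (∏' n : ℕ, (1 - x ^ (n + 1)))) :=
  (multipliable_one_sub_pow_succ hx).hasProd.tendsto_prod_nat

lemma exists_norm_gaussBinom_le (hx : ‖x‖ < 1) :
    ∃ C, ∀ M m, m ≤ M → ‖gaussBinom x M m‖ ≤ C := by
  have hP := tendsto_qPochhammer hx
  obtain ⟨B, hB⟩ := isBounded_iff_forall_norm_le.mp (Metric.isBounded_range_of_tendsto _ hP)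
  obtain ⟨B', hB'⟩ := isBounded_iff_forall_norm_le.mp
    (Metric.isBounded_range_of_tendsto _ (hP.inv₀ (tprod_one_sub_pow_succ_ne_zero hx)))
  have hB0 : 0 ≤ B := (norm_nonneg _).trans (hB _ ⟨0, rfl⟩)
  refine ⟨B * B' * B', fun M m h => ?_⟩
  rw [gaussBinom_eq_mul_inv_mul_inv hx h, norm_mul, norm_mul]
  exact mul_le_mul (mul_le_mul (hB _ ⟨M, rfl⟩) (hB' _ ⟨m, rfl⟩) (norm_nonneg _) hB0)
    (hB' _ ⟨M - m, rfl⟩) (norm_nonneg _) (mul_nonneg hB0 ((norm_nonneg _).trans (hB' _ ⟨m, rfl⟩)))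

lemma tendsto_gaussBinom_two_mul (hx : ‖x‖ < 1) (m : ℤ) :
    Tendsto (fun N : ℕ => gaussBinom x (2 * N) (N + m).toNat) atTop
      (𝓝 (∏' n : ℕ, (1 - x ^ (n + 1)))⁻¹) := by
  have hP := tendsto_qPochhammer hx
  have hL := tprod_one_sub_pow_succ_ne_zero hx
  have htwo : Tendsto (fun N : ℕ => 2 * N) atTop atTop :=
    tendsto_atTop_atTop.mpr fun c => ⟨c, fun N hN => by omega⟩
  have hshift (b : ℤ) : Tendsto (fun N : ℕ => (N + b).toNat) atTop atTop :=
    tendsto_atTop_atTop.mpr fun c => ⟨c + b.natAbs, fun N hN => by omega⟩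
  have h := ((hP.comp htwo).mul ((hP.comp (hshift m)).inv₀ hL)).mul
    ((hP.comp (hshift (-m))).inv₀ hL)
  rw [mul_inv_cancel₀ hL, one_mul] at h
  refine h.congr' ?_
  filter_upwards [eventually_ge_atTop m.natAbs] with N hN
  rw [gaussBinom_eq_mul_inv_mul_inv hx (by omega)]
  simp only [Function.comp_apply]
  congr
  omega

end Convergence

/-- The summands are those of `jacobiTheta₂ (log b / (2πi)) (log a / (πi))`. -/
lemma summable_norm_zpow_sq_mul_zpow {a b : ℂ} (ha0 : a ≠ 0) (ha : ‖a‖ < 1) (hb : b ≠ 0) :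
    Summable fun n : ℤ => ‖a ^ (n ^ 2) * b ^ n‖ := by
  set τ := log a / (π * I)
  set z := log b / (2 * π * I)
  have hτ : 0 < τ.im := by
    have hτ' : τ = -(log a * I) / π := by
      simp only [τ]; field_simp; rw [I_sq]; ring
    rw [hτ', neg_div, neg_im, div_ofReal_im, mul_I_im, log_re, neg_pos]
    exact div_neg_of_neg_of_pos (Real.log_neg (norm_pos_iff.mpr ha0) ha) pi_pos
  have hterm (n : ℤ) : a ^ (n ^ 2) * b ^ n = jacobiTheta₂_term n z τ := by
    rw [jacobiTheta₂_term, Complex.exp_add, mul_comm]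
    have h1 : 2 * π * I * n * z = n * log b := by
      simp only [z]; field_simp
    have h2 : π * I * n ^ 2 * τ = ((n ^ 2 : ℤ) : ℂ) * log a := by
      simp only [τ]; push_cast; field_simp
    rw [h1, h2, exp_int_mul, exp_int_mul, exp_log ha0, exp_log hb]
  simp_rw [hterm]
  exact summable_norm_iff.mpr ((summable_jacobiTheta₂_term_iff z τ).mpr hτ)

theorem tendsto_prod_range_jacobi {q w : ℂ} (hq : q ≠ 0) (hq1 : ‖q‖ < 1) (hw : w ≠ 0) :
    Tendsto (fun N => ∏ n ∈ range N, ((1 + w * q ^ (2 * n + 1)) * (1 + w⁻¹ * q ^ (2 * n + 1))))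
      atTop (𝓝 ((∏' n : ℕ, (1 - (q ^ 2) ^ (n + 1)))⁻¹ * ∑' m : ℤ, q ^ (m ^ 2) * w ^ m)) := by
  have hx : ‖q ^ 2‖ < 1 := by rw [norm_pow]; exact pow_lt_one₀ (norm_nonneg q) hq1 two_ne_zero
  obtain ⟨C, hC⟩ := exists_norm_gaussBinom_le hx
  have hC0 : 0 ≤ C := (norm_nonneg _).trans (hC 0 0 le_rfl)
  let F (N : ℕ) (m : ℤ) : ℂ := if m ∈ Icc (-N : ℤ) N then
    gaussBinom (q ^ 2) (2 * N) (N + m).toNat * q ^ (m ^ 2) * w ^ m else 0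
  have hF (N : ℕ) : ∑' m, F N m =
      ∏ n ∈ range N, ((1 + w * q ^ (2 * n + 1)) * (1 + w⁻¹ * q ^ (2 * n + 1))) := by
    rw [tsum_eq_sum (s := Icc (-N : ℤ) N) fun m hm => if_neg hm, prod_range_jacobi_eq_sum hq hw]
    exact sum_congr rfl fun m hm => if_pos hm
  simp_rw [← hF, ← tsum_mul_left]
  refine tendsto_tsum_of_dominated_convergence
    ((summable_norm_zpow_sq_mul_zpow hq hq1 hw).mul_left C) (fun m => ?_)
    (Eventually.of_forall fun N m => ?_)
  · refine ((tendsto_gaussBinom_two_mul hx m).mul_const _).congr' ?_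
    filter_upwards [eventually_ge_atTop m.natAbs] with N hN
    rw [show F N m = _ from if_pos (mem_Icc.mpr ⟨by omega, by omega⟩), mul_assoc]
  · dsimp only [F]
    split_ifs with hm
    · rw [mul_assoc, norm_mul]
      exact mul_le_mul_of_nonneg_right (hC _ _ (by grind)) (norm_nonneg _)
    · rw [norm_zero]; positivity

/-- **Jacobi's triple product identity.** -/
theorem hasProd_jacobi_triple {q w : ℂ} (hq : q ≠ 0) (hq1 : ‖q‖ < 1) (hw : w ≠ 0) :
    HasProd (fun n : ℕ => (1 - q ^ (2 * n + 2)) * (1 + w * q ^ (2 * n + 1)) *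
        (1 + w⁻¹ * q ^ (2 * n + 1)))
      (∑' m : ℤ, q ^ (m ^ 2) * w ^ m) := by
  have hx : ‖q ^ 2‖ < 1 := by rw [norm_pow]; exact pow_lt_one₀ (norm_nonneg q) hq1 two_ne_zero
  have hodd (c : ℂ) : Multipliable fun n : ℕ => 1 + c * q ^ (2 * n + 1) :=
    (multipliable_one_add_mul_pow hx (c * q)).congr fun n => by ring
  have hW := (hodd w).mul (hodd w⁻¹)
  have hT := tendsto_nhds_unique (tendsto_prod_range_jacobi hq hq1 hw) hW.hasProd.tendsto_prod_nat
  convert (multipliable_one_sub_pow_succ hx).hasProd.mul hW.hasProd using 1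
  · exact funext fun n => by ring
  · rw [← hT, mul_inv_cancel_left₀ (tprod_one_sub_pow_succ_ne_zero hx)]

def evenOddEquiv : (ℤ × ℤ) ⊕ (ℤ × ℤ) ≃ ℤ × ℤ where
  toFun := Sum.elim (fun jk => (jk.1 + jk.2, jk.1 - jk.2)) fun jk => (jk.1 + jk.2 + 1, jk.1 - jk.2)
  invFun mn := if (mn.1 + mn.2) % 2 = 0 then .inl ((mn.1 + mn.2) / 2, (mn.1 - mn.2) / 2)
    else .inr ((mn.1 + mn.2 - 1) / 2, (mn.1 - mn.2 - 1) / 2)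
  left_inv := by
    rintro (⟨j, k⟩ | ⟨j, k⟩) <;> dsimp only [Sum.elim_inl, Sum.elim_inr] <;> split_ifs <;> grind
  right_inv := by
    rintro ⟨m, n⟩
    dsimp only
    split_ifs <;> simp only [Sum.elim_inl, Sum.elim_inr, Prod.mk.injEq] <;> omega

lemma tsum_int_prod_eq_tsum_add_tsum {E : Type*} [NormedAddCommGroup E] [CompleteSpace E]
    {F : ℤ × ℤ → E} (hF : Summable F) :
    ∑' mn, F mn = ∑' jk : ℤ × ℤ, F (jk.1 + jk.2, jk.1 - jk.2) +
      ∑' jk : ℤ × ℤ, F (jk.1 + jk.2 + 1, jk.1 - jk.2) := by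
  have h := evenOddEquiv.summable_iff.mpr hF
  rw [← evenOddEquiv.tsum_eq]
  change ∑' c, (F ∘ evenOddEquiv) c = _
  rw [Summable.tsum_sum (h.comp_injective Sum.inl_injective) (h.comp_injective Sum.inr_injective)]
  rfl

section ThetaSquares

variable {q w p u : ℂ}

lemma theta0_sq (hq : q ≠ 0) (hq1 : ‖q‖ < 1) (hw : w ≠ 0) :
    theta0 q w ^ 2 = ∑' jk : ℤ × ℤ,
      q ^ ((jk.1 + jk.2) ^ 2) * w ^ (jk.1 + jk.2) * q ^ ((jk.1 - jk.2) ^ 2) := by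
  have h : Summable fun k : ℤ => ‖q ^ (2 * k ^ 2) * w ^ k‖ := by
    simpa only [zpow_mul, zpow_ofNat] using summable_norm_zpow_sq_mul_zpow (pow_ne_zero 2 hq)
      (by rw [norm_pow]; exact pow_lt_one₀ (norm_nonneg q) hq1 two_ne_zero) hw
  rw [sq, theta0, tsum_mul_tsum_of_summable_norm h h]
  refine tsum_congr fun jk => ?_
  rw [mul_mul_mul_comm, ← zpow_add₀ hq, ← zpow_add₀ hw, mul_right_comm, ← zpow_add₀ hq]
  ring_nf

lemma theta1_sq (hq : q ≠ 0) (hq1 : ‖q‖ < 1) (hw : w ≠ 0) (hp : p ^ 2 = q) (hu : u ^ 2 = w) :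
    theta1 p u ^ 2 = ∑' jk : ℤ × ℤ,
      q ^ ((jk.1 + jk.2 + 1) ^ 2) * w ^ (jk.1 + jk.2 + 1) * q ^ ((jk.1 - jk.2) ^ 2) := by
  have hp0 : p ≠ 0 := by rintro rfl; simp_all
  have hu0 : u ≠ 0 := by rintro rfl; simp_all
  have hq2 : q ^ 2 ≠ 0 := pow_ne_zero 2 hq
  have hterm (k : ℤ) : p ^ (4 * k ^ 2 + 4 * k + 1) * u ^ (2 * k + 1) =
      p * u * ((q ^ 2) ^ (k ^ 2) * (q ^ 2 * w) ^ k) := by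
    rw [zpow_add₀ hp0, zpow_add₀ hp0, zpow_add₀ hu0, zpow_mul, zpow_mul, zpow_mul, mul_zpow, ← hp,
      ← hu, ← pow_mul]
    simp only [zpow_ofNat]
    ring
  have h : Summable fun k : ℤ => ‖p ^ (4 * k ^ 2 + 4 * k + 1) * u ^ (2 * k + 1)‖ := by
    simpa only [hterm, norm_mul] using (summable_norm_zpow_sq_mul_zpow hq2
      (by rw [norm_pow]; exact pow_lt_one₀ (norm_nonneg q) hq1 two_ne_zero)
      (mul_ne_zero hq2 hw)).mul_left (‖p‖ * ‖u‖)
  rw [sq, theta1, tsum_mul_tsum_of_summable_norm h h]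
  refine tsum_congr fun jk => ?_
  rw [mul_right_comm (q ^ _), ← zpow_add₀ hq, ← hp, ← hu]
  simp only [← zpow_natCast, ← zpow_mul]
  rw [mul_mul_mul_comm, ← zpow_add₀ hp0, ← zpow_add₀ hu0]
  ring_nf

lemma theta0_sq_add_theta1_sq (hq : q ≠ 0) (hq1 : ‖q‖ < 1) (hw : w ≠ 0) (hp : p ^ 2 = q)
    (hu : u ^ 2 = w) :
    theta0 q w ^ 2 + theta1 p u ^ 2 = (∑' m : ℤ, q ^ (m ^ 2) * w ^ m) * ∑' n : ℤ, q ^ (n ^ 2) := by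
  have h1 := summable_norm_zpow_sq_mul_zpow hq hq1 hw
  have h2 : Summable fun n : ℤ => ‖q ^ (n ^ 2)‖ := by
    simpa only [one_zpow, mul_one] using summable_norm_zpow_sq_mul_zpow hq hq1 one_ne_zero
  rw [theta0_sq hq hq1 hw, theta1_sq hq hq1 hw hp hu, tsum_mul_tsum_of_summable_norm h1 h2]
  exact (tsum_int_prod_eq_tsum_add_tsum (E := ℂ) (summable_mul_of_summable_norm h1 h2)).symm

end ThetaSquares

/-- the quadratic theta function identity
`θ₀(q²,w)² + θ₁(q²,w)² = ∏_{n≥1} (1−q^{2n})²(1+q^{2n−1})²(1+wq^{2n−1})(1+w⁻¹q^{2n−1})`. -/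
theorem quadratic_theta_identity (q w p u : ℂ)
    (hq0 : 0 < ‖q‖) (hq1 : ‖q‖ < 1) (hw : w ≠ 0)
    (hp : p ^ 2 = q) (hu : u ^ 2 = w) :
    theta0 q w ^ 2 + theta1 p u ^ 2 =
      ∏' n : ℕ, ((1 - q ^ (2 * n + 2)) ^ 2 * (1 + q ^ (2 * n + 1)) ^ 2 *
        (1 + w * q ^ (2 * n + 1)) * (1 + w⁻¹ * q ^ (2 * n + 1))) := by
  have hq : q ≠ 0 := norm_pos_iff.mp hq0
  have hprod := (hasProd_jacobi_triple hq hq1 hw).mul (hasProd_jacobi_triple hq hq1 one_ne_zero)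
  simp only [inv_one, one_mul, one_zpow, mul_one] at hprod
  rw [theta0_sq_add_theta1_sq hq hq1 hw hp hu, ← hprod.tprod_eq]
  exact tprod_congr fun n => by ring
end

section
/- The sum of the squares of the two theta series factorizes as a product of two rank-one theta functions at the 'unsquared' modulus: θ₀(q²,w)² + θ₁(q²,w)² = θ₀(q,1) · θ₀(q,w), where θ₀(q,w) := Σ_{k∈ℤ} q^{k²} w^k. -/
/-- The rank-one theta function at the 'unsquared' modulus:
`θ₀(q,w) = Σ_{k∈ℤ} q^{k²} w^k`. -/
noncomputable def theta0' (q w : ℂ) : ℂ := ∑' k : ℤ, q ^ (k ^ 2) * w ^ k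

open Filter Topology

lemma summable_nat_zpow_quadratic_mul_zpow {r s : ℝ} (hr0 : 0 < r) (hr1 : r < 1) (hs : 0 ≤ s)
    {a : ℤ} (ha : 0 < a) (b : ℤ) :
    Summable fun n : ℕ => r ^ (a * n ^ 2 + b * n) * s ^ (n : ℤ) := by
  have hterm (n : ℕ) : r ^ (a * n ^ 2 + b * n) * s ^ (n : ℤ) = (r ^ b * (r ^ a) ^ n * s) ^ n := by
    rw [mul_pow, zpow_natCast, ← zpow_natCast (r ^ a), ← zpow_mul, ← zpow_add₀ hr0.ne',
      ← zpow_natCast (r ^ (b + a * n)), ← zpow_mul]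
    ring_nf
  have hratio : Tendsto (fun n : ℕ => r ^ b * (r ^ a) ^ n * s) atTop (𝓝 0) := by
    simpa using ((tendsto_pow_atTop_nhds_zero_of_lt_one (zpow_pos hr0 a).le
      (zpow_lt_one₀ hr0 hr1 ha)).const_mul (r ^ b)).mul_const s
  refine (summable_geometric_of_lt_one (by norm_num : (0 : ℝ) ≤ 1 / 2) (by norm_num))
    |>.of_norm_bounded_eventually_nat ?_
  filter_upwards [hratio.eventually_le_const (by norm_num : (0 : ℝ) < 1 / 2)] with n hn
  rw [hterm, norm_pow, Real.norm_of_nonneg (by positivity)]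
  exact pow_le_pow_left₀ (by positivity) hn n

lemma summable_norm_zpow_quadratic_mul_zpow {𝕜 : Type*} [NormedDivisionRing 𝕜] {q w : 𝕜}
    (hq0 : q ≠ 0) (hq1 : ‖q‖ < 1) {a : ℤ} (ha : 0 < a) (b : ℤ) :
    Summable fun k : ℤ => ‖q ^ (a * k ^ 2 + b * k) * w ^ k‖ := by
  simp only [norm_mul, norm_zpow]
  apply Summable.of_nat_of_neg
  · simpa using summable_nat_zpow_quadratic_mul_zpow (norm_pos_iff.2 hq0) hq1 (norm_nonneg w) ha b
  · refine (summable_nat_zpow_quadratic_mul_zpow (norm_pos_iff.2 hq0) hq1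
      (inv_nonneg.2 (norm_nonneg w)) ha (-b)).congr fun n => ?_
    rw [inv_zpow, ← zpow_neg]
    ring_nf

def latticeCosetEquiv : (ℤ × ℤ) ⊕ (ℤ × ℤ) ≃ ℤ × ℤ where
  toFun := Sum.elim (fun x => (x.1 - x.2, x.1 + x.2)) (fun x => (x.1 - x.2, x.1 + x.2 + 1))
  invFun x :=
    if (x.1 + x.2) % 2 = 0 then .inl ((x.1 + x.2) / 2, (x.2 - x.1) / 2)
    else .inr ((x.1 + x.2 - 1) / 2, (x.2 - x.1 - 1) / 2)
  left_inv := by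
    rintro (⟨i, j⟩ | ⟨i, j⟩) <;> dsimp only [Sum.elim_inl, Sum.elim_inr] <;> split_ifs <;>
      first | omega | simp only [Sum.inl.injEq, Sum.inr.injEq, Prod.mk.injEq]; omega
  right_inv := by
    rintro ⟨m, n⟩
    dsimp only
    split_ifs <;> simp only [Sum.elim_inl, Sum.elim_inr, Prod.mk.injEq] <;> omega

lemma hasSum_mul_of_summable_norm {R ι κ : Type*} [NormedRing R] [CompleteSpace R]
    {f : ι → R} {g : κ → R} (hf : Summable fun i => ‖f i‖) (hg : Summable fun j => ‖g j‖) :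
    HasSum (fun x : ι × κ => f x.1 * g x.2) ((∑' i, f i) * ∑' j, g j) :=
  hf.of_norm.hasSum.mul hg.of_norm.hasSum (summable_mul_of_summable_norm hf hg)

lemma zpow_two_mul_add_one {G₀ : Type*} [GroupWithZero G₀] (a : G₀) (k : ℤ) :
    a ^ (2 * k + 1) = (a ^ 2) ^ k * a := by
  rw [zpow_add' (.inr (.inl (by omega))), zpow_mul, zpow_ofNat, zpow_one]

lemma theta1_eq_mul_tsum (p u : ℂ) :
    theta1 p u = p * u * ∑' k : ℤ, (p ^ 2) ^ (2 * k ^ 2 + 2 * k) * (u ^ 2) ^ k := by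
  rw [theta1, ← tsum_mul_left]
  congr 1 with k
  rw [show 4 * k ^ 2 + 4 * k + 1 = 2 * (2 * k ^ 2 + 2 * k) + 1 by ring, zpow_two_mul_add_one,
    zpow_two_mul_add_one]
  ring

section Theta

variable {q w : ℂ}

lemma hasSum_theta0'_one_mul_theta0' (hq0 : q ≠ 0) (hq1 : ‖q‖ < 1) :
    HasSum (fun x : ℤ × ℤ => q ^ (x.1 ^ 2 + x.2 ^ 2) * w ^ x.2) (theta0' q 1 * theta0' q w) := by
  have hsummable (v : ℂ) : Summable fun k : ℤ => ‖q ^ (k ^ 2) * v ^ k‖ := by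
    simpa using summable_norm_zpow_quadratic_mul_zpow (w := v) hq0 hq1 one_pos 0
  refine (hasSum_mul_of_summable_norm (hsummable 1) (hsummable w)).congr_fun fun x => ?_
  rw [one_zpow, mul_one, zpow_add₀ hq0, mul_assoc]

lemma hasSum_theta0_sq (hq0 : q ≠ 0) (hq1 : ‖q‖ < 1) :
    HasSum (fun x : ℤ × ℤ => q ^ (2 * x.1 ^ 2) * w ^ x.1 * (q ^ (2 * x.2 ^ 2) * w ^ x.2))
      (theta0 q w ^ 2) := by
  have hsummable : Summable fun k : ℤ => ‖q ^ (2 * k ^ 2) * w ^ k‖ := by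
    simpa using summable_norm_zpow_quadratic_mul_zpow (w := w) hq0 hq1 two_pos 0
  simpa only [sq, theta0] using hasSum_mul_of_summable_norm hsummable hsummable

lemma hasSum_theta1_sq {p u : ℂ} (hq0 : q ≠ 0) (hq1 : ‖q‖ < 1) (hp : p ^ 2 = q)
    (hu : u ^ 2 = w) :
    HasSum (fun x : ℤ × ℤ => q * w *
        (q ^ (2 * x.1 ^ 2 + 2 * x.1) * w ^ x.1 * (q ^ (2 * x.2 ^ 2 + 2 * x.2) * w ^ x.2)))
      (theta1 p u ^ 2) := by
  have hsummable := summable_norm_zpow_quadratic_mul_zpow (w := w) hq0 hq1 two_pos 2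
  rw [theta1_eq_mul_tsum, hp, hu, mul_pow, mul_pow, hp, hu, sq (∑' _, _)]
  exact (hasSum_mul_of_summable_norm hsummable hsummable).mul_left (q * w)

lemma zpow_sq_add_sq_mul_zpow_even (hq : q ≠ 0) (hw : w ≠ 0) (i j : ℤ) :
    q ^ ((i - j) ^ 2 + (i + j) ^ 2) * w ^ (i + j)
      = q ^ (2 * i ^ 2) * w ^ i * (q ^ (2 * j ^ 2) * w ^ j) := by
  rw [show (i - j) ^ 2 + (i + j) ^ 2 = 2 * i ^ 2 + 2 * j ^ 2 by ring, zpow_add₀ hq,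
    zpow_add₀ hw]
  ring

lemma zpow_sq_add_sq_mul_zpow_odd (hq : q ≠ 0) (hw : w ≠ 0) (i j : ℤ) :
    q ^ ((i - j) ^ 2 + (i + j + 1) ^ 2) * w ^ (i + j + 1)
      = q * w * (q ^ (2 * i ^ 2 + 2 * i) * w ^ i * (q ^ (2 * j ^ 2 + 2 * j) * w ^ j)) := by
  rw [show (i - j) ^ 2 + (i + j + 1) ^ 2 = 2 * i ^ 2 + 2 * i + (2 * j ^ 2 + 2 * j) + 1 by ring,
    zpow_add_one₀ hq, zpow_add_one₀ hw, zpow_add₀ hq, zpow_add₀ hw]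
  ring

end Theta

/-- `θ₀(q²,w)² + θ₁(q²,w)² = θ₀(q,1)·θ₀(q,w)`. -/
theorem theta_squares_factorize (q w p u : ℂ)
    (hq0 : 0 < ‖q‖) (hq1 : ‖q‖ < 1) (hw : w ≠ 0)
    (hp : p ^ 2 = q) (hu : u ^ 2 = w) :
    theta0 q w ^ 2 + theta1 p u ^ 2 = theta0' q 1 * theta0' q w := by
  have hq : q ≠ 0 := norm_pos_iff.mp hq0
  have hprod := latticeCosetEquiv.hasSum_iff.mpr (hasSum_theta0'_one_mul_theta0' (w := w) hq hq1)
  refine (HasSum.sum ?_ ?_).unique hprod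
  · exact (hasSum_theta0_sq hq hq1).congr_fun fun x =>
      zpow_sq_add_sq_mul_zpow_even hq hw x.1 x.2
  · exact (hasSum_theta1_sq hq hq1 hp hu).congr_fun fun x =>
      zpow_sq_add_sq_mul_zpow_odd hq hw x.1 x.2
end
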